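/- Let d ≥ 1, let Λ be a lattice in ℝ^d, let m ∈ ℕ with m ≥ 1, and let s > d be real. Then Σ_{x ∈ ((1/m)Λ ∩ Ω_Λ)\{0}} ζ_Λ(s; x) = (m^s − 1)·ζ_Λ(s), and consequently Σ over ordered pairs of distinct points x, y ∈ (1/m)Λ ∩ Ω_Λ of ζ_Λ(s; x−y) equals m^d(m^s − 1)·ζ_Λ(s). Here (1/m)Λ ∩ Ω_Λ consists of exactly m^d points. -/

import Mathlib

open scoped Real BigOperators
open MeasureTheory Filter

noncomputable section

/-- The lattice point `A k` for an integer vector `k : ℤ^d`. -/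
def latPt {d : ℕ} (A : Matrix (Fin d) (Fin d) ℝ) (k : Fin d → ℤ) :
    EuclideanSpace ℝ (Fin d) :=
  (WithLp.equiv 2 (Fin d → ℝ)).symm (A.mulVec fun i => (k i : ℝ))

/-- The lattice `Λ = A ℤ^d` as a subset of `ℝ^d`. -/
def latticeSet {d : ℕ} (A : Matrix (Fin d) (Fin d) ℝ) : Set (EuclideanSpace ℝ (Fin d)) :=
  Set.range (latPt A)

/-- The co-volume `|Λ| = |det A|`. -/
def covol {d : ℕ} (A : Matrix (Fin d) (Fin d) ℝ) : ℝ := |A.det|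

/-- Generating matrix `(Aᵀ)⁻¹` of the dual lattice `Λ*`. -/
def dualMat {d : ℕ} (A : Matrix (Fin d) (Fin d) ℝ) : Matrix (Fin d) (Fin d) ℝ :=
  A.transpose⁻¹

/-- The fundamental domain `Ω_Λ = {A t : t ∈ [0,1)^d}`. -/
def fundDomain {d : ℕ} (A : Matrix (Fin d) (Fin d) ℝ) : Set (EuclideanSpace ℝ (Fin d)) :=
  {x | ∃ t : Fin d → ℝ, (∀ i, 0 ≤ t i ∧ t i < 1) ∧
    x = (WithLp.equiv 2 (Fin d → ℝ)).symm (A.mulVec t)}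

/-- The periodic Riesz `s`-potential `F_{s,Λ}(x)` (complex parameter `s`). -/
def rieszF {d : ℕ} (A : Matrix (Fin d) (Fin d) ℝ) (s : ℂ)
    (x : EuclideanSpace ℝ (Fin d)) : ℂ :=
  (∑' k : Fin d → ℤ, ∫ t in Set.Ioi (1:ℝ),
      (Real.exp (-‖x + latPt A k‖ ^ 2 * t) : ℂ) * (t : ℂ) ^ (s / 2 - 1) /
        Complex.Gamma (s / 2))
  + (covol A : ℂ)⁻¹ * ∑' w : {k : Fin d → ℤ // k ≠ 0},
      Complex.exp (2 * Real.pi * Complex.I *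
          ((inner ℝ (latPt (dualMat A) w.1) x : ℝ) : ℂ)) *
      ∫ t in Set.Ioo (0:ℝ) 1, (Real.pi : ℂ) ^ ((d : ℂ) / 2) *
        (t : ℂ) ^ ((s - d) / 2 - 1) *
        (Real.exp (-(Real.pi ^ 2 * ‖latPt (dualMat A) w.1‖ ^ 2) / t) : ℂ) /
        Complex.Gamma (s / 2)

/-- The periodic Riesz `s`-energy of a configuration (for real `s`); the potential
`F_{s,Λ}` is real-valued, so we take the real part of the complex formula. -/
def rieszEnergy {d : ℕ} (A : Matrix (Fin d) (Fin d) ℝ) (s : ℝ) {N : ℕ}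
    (ω : Fin N → EuclideanSpace ℝ (Fin d)) : ℝ :=
  ∑ j : Fin N, ∑ k : Fin N, if j ≠ k then (rieszF A (s : ℂ) (ω j - ω k)).re else 0

/-- The minimal `N`-point periodic Riesz `s`-energy `ℰ_{s,Λ}(N)`.  (Configurations with
two points coinciding modulo `Λ` have infinite energy, so the infimum is taken over
configurations whose points are distinct modulo `Λ`.) -/
def minRieszEnergy {d : ℕ} (A : Matrix (Fin d) (Fin d) ℝ) (s : ℝ) (N : ℕ) : ℝ :=
  sInf {E : ℝ | ∃ ω : Fin N → EuclideanSpace ℝ (Fin d),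
    (∀ j k : Fin N, j ≠ k → ω j - ω k ∉ latticeSet A) ∧ E = rieszEnergy A s ω}

/-- The periodic logarithmic potential `F_{log,Λ}(x)`. -/
def logF {d : ℕ} (A : Matrix (Fin d) (Fin d) ℝ) (x : EuclideanSpace ℝ (Fin d)) : ℝ :=
  (∑' k : Fin d → ℤ, ∫ t in Set.Ioi (1:ℝ), Real.exp (-‖x + latPt A k‖ ^ 2 * t) / t)
  + (covol A)⁻¹ * (∑' w : {k : Fin d → ℤ // k ≠ 0},
      Complex.exp (2 * Real.pi * Complex.I *
          ((inner ℝ (latPt (dualMat A) w.1) x : ℝ) : ℂ)) *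
      ((∫ t in Set.Ioo (0:ℝ) 1, Real.pi ^ ((d : ℝ) / 2) * t ^ (-(d : ℝ) / 2 - 1) *
          Real.exp (-(Real.pi ^ 2 * ‖latPt (dualMat A) w.1‖ ^ 2) / t) : ℝ) : ℂ)).re

/-- The periodic logarithmic energy of a configuration. -/
def logEnergy {d : ℕ} (A : Matrix (Fin d) (Fin d) ℝ) {N : ℕ}
    (ω : Fin N → EuclideanSpace ℝ (Fin d)) : ℝ :=
  ∑ j : Fin N, ∑ k : Fin N, if j ≠ k then logF A (ω j - ω k) else 0

/-- The minimal `N`-point periodic logarithmic energy `ℰ_{log,Λ}(N)`. -/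
def minLogEnergy {d : ℕ} (A : Matrix (Fin d) (Fin d) ℝ) (N : ℕ) : ℝ :=
  sInf {E : ℝ | ∃ ω : Fin N → EuclideanSpace ℝ (Fin d),
    (∀ j k : Fin N, j ≠ k → ω j - ω k ∉ latticeSet A) ∧ E = logEnergy A ω}

/-- The Epstein zeta function `ζ_Λ(s) = Σ_{v ∈ Λ \ {0}} |v|^{-s}` (for real `s > d`). -/
def epsteinZeta {d : ℕ} (A : Matrix (Fin d) (Fin d) ℝ) (s : ℝ) : ℝ :=
  ∑' k : {k : Fin d → ℤ // k ≠ 0}, ‖latPt A k.1‖ ^ (-s)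

/-- The Epstein–Hurwitz zeta function `ζ_Λ(s;x) = Σ_{v ∈ Λ} |x+v|^{-s}` (real `s > d`). -/
def epHurwitzZeta {d : ℕ} (A : Matrix (Fin d) (Fin d) ℝ) (s : ℝ)
    (x : EuclideanSpace ℝ (Fin d)) : ℝ :=
  ∑' k : Fin d → ℤ, ‖x + latPt A k‖ ^ (-s)

/-- The analytic continuation `Z_Λ(s)` of the Epstein zeta function; the term
`-(2/Γ(s/2))·(1/s)` is written as `-1/Γ(s/2+1)`, which makes the apparent singularity
at `s = 0` removable. -/
def epsteinZ {d : ℕ} (A : Matrix (Fin d) (Fin d) ℝ) (s : ℂ) : ℂ :=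
  4 * (Real.pi : ℂ) ^ ((d : ℂ) / 2) * (covol A : ℂ)⁻¹ /
      (Complex.Gamma (s / 2) * (s - d))
  - 1 / Complex.Gamma (s / 2 + 1)
  + ∑' k : {k : Fin d → ℤ // k ≠ 0}, ∫ t in Set.Ioi (1:ℝ),
      (Real.exp (-‖latPt A k.1‖ ^ 2 * t) : ℂ) * (t : ℂ) ^ (s / 2 - 1) /
        Complex.Gamma (s / 2)
  + (covol A : ℂ)⁻¹ * ∑' w : {k : Fin d → ℤ // k ≠ 0}, ∫ t in Set.Ioo (0:ℝ) 1,
      (Real.pi : ℂ) ^ ((d : ℂ) / 2) * (t : ℂ) ^ ((s - d) / 2 - 1) *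
      (Real.exp (-(Real.pi ^ 2 * ‖latPt (dualMat A) w.1‖ ^ 2) / t) : ℂ) /
        Complex.Gamma (s / 2)


namespace Stmt9

variable {d : ℕ}

lemma latPt_add (A : Matrix (Fin d) (Fin d) ℝ) (a b : Fin d → ℤ) :
    latPt A (a + b) = latPt A a + latPt A b := by
  have harg : (fun i => (((a + b) i : ℤ) : ℝ)) = (fun i => ((a i : ℝ))) + (fun i => ((b i : ℝ))) := by
    funext i; simp
  unfold latPt
  rw [harg, Matrix.mulVec_add, WithLp.equiv_symm_apply, WithLp.toLp_add]

lemma latPt_sub (A : Matrix (Fin d) (Fin d) ℝ) (a b : Fin d → ℤ) :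
    latPt A (a - b) = latPt A a - latPt A b := by
  have harg : (fun i => (((a - b) i : ℤ) : ℝ)) = (fun i => ((a i : ℝ))) - (fun i => ((b i : ℝ))) := by
    funext i; simp
  unfold latPt
  rw [harg, Matrix.mulVec_sub, WithLp.equiv_symm_apply, WithLp.toLp_sub]

lemma latPt_zero (A : Matrix (Fin d) (Fin d) ℝ) : latPt A 0 = 0 := by
  unfold latPt
  have : (fun i => (((0 : Fin d → ℤ) i : ℝ))) = (0 : Fin d → ℝ) := by
    funext i; simp
  rw [this, Matrix.mulVec_zero, WithLp.equiv_symm_apply, WithLp.toLp_zero]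

lemma latPt_nsmul (A : Matrix (Fin d) (Fin d) ℝ) (m : ℕ) (k : Fin d → ℤ) :
    latPt A (m • k) = (m : ℝ) • latPt A k := by
  have harg : (fun i => (((m • k) i : ℤ) : ℝ)) = (m : ℝ) • (fun i => ((k i : ℝ))) := by
    funext i; simp [Pi.smul_apply]
  unfold latPt
  rw [harg, Matrix.mulVec_smul, WithLp.equiv_symm_apply, WithLp.toLp_smul]

lemma mulVec_inj {A : Matrix (Fin d) (Fin d) ℝ} (hA : A.det ≠ 0) :
    Function.Injective (A.mulVec : (Fin d → ℝ) → (Fin d → ℝ)) :=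
  Matrix.mulVec_injective_iff_isUnit.mpr
    ((Matrix.isUnit_iff_isUnit_det A).mpr (isUnit_iff_ne_zero.mpr hA))

lemma latPt_inj {A : Matrix (Fin d) (Fin d) ℝ} (hA : A.det ≠ 0) :
    Function.Injective (latPt A) := by
  intro a b hab
  unfold latPt at hab
  have h2 := mulVec_inj hA ((WithLp.equiv 2 (Fin d → ℝ)).symm.injective hab)
  funext i
  have := congrFun h2 i
  exact_mod_cast this

lemma latPt_eq_zero_iff {A : Matrix (Fin d) (Fin d) ℝ} (hA : A.det ≠ 0) (k : Fin d → ℤ) :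
    latPt A k = 0 ↔ k = 0 :=
  ⟨fun h => latPt_inj hA (h.trans (latPt_zero A).symm), fun h => h ▸ latPt_zero A⟩

lemma abs_apply_le_norm (x : EuclideanSpace ℝ (Fin d)) (i : Fin d) : |x i| ≤ ‖x‖ := by
  rw [EuclideanSpace.norm_eq, ← Real.sqrt_sq_eq_abs]
  apply Real.sqrt_le_sqrt
  have := Finset.single_le_sum (f := fun j => ‖x j‖ ^ 2)
    (fun j _ => by positivity) (Finset.mem_univ i)
  simpa [Real.norm_eq_abs, sq_abs] using this

lemma coord_bound {A : Matrix (Fin d) (Fin d) ℝ} (hA : A.det ≠ 0) :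
    ∃ C : ℝ, 1 ≤ C ∧ ∀ (k : Fin d → ℤ) (i : Fin d), |(k i : ℝ)| ≤ C * ‖latPt A k‖ := by
  refine ⟨(∑ i, ∑ j, |A⁻¹ i j|) + 1,
    le_add_of_nonneg_left (Finset.sum_nonneg fun i _ =>
      Finset.sum_nonneg fun j _ => abs_nonneg _), ?_⟩
  intro k i
  have hk : (fun j => (k j : ℝ)) = A⁻¹.mulVec (A.mulVec fun j => (k j : ℝ)) := by
    rw [Matrix.mulVec_mulVec, Matrix.nonsing_inv_mul A (isUnit_iff_ne_zero.mpr hA),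
      Matrix.one_mulVec]
  have h1 : |(k i : ℝ)| = |∑ j, A⁻¹ i j * (A.mulVec fun j => (k j : ℝ)) j| := by
    have := congrFun hk i
    simp only [Matrix.mulVec, dotProduct] at this ⊢
    rw [this]
  have h2 : ∀ j : Fin d, |(A.mulVec fun j => (k j : ℝ)) j| ≤ ‖latPt A k‖ := fun j =>
    abs_apply_le_norm (latPt A k) j
  calc |(k i : ℝ)| ≤ ∑ j, |A⁻¹ i j| * |(A.mulVec fun j => (k j : ℝ)) j| := by
        rw [h1]
        refine (Finset.abs_sum_le_sum_abs _ _).trans ?_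
        exact le_of_eq (Finset.sum_congr rfl fun j _ => abs_mul _ _)
    _ ≤ ∑ j, |A⁻¹ i j| * ‖latPt A k‖ := Finset.sum_le_sum fun j _ =>
        mul_le_mul_of_nonneg_left (h2 j) (abs_nonneg _)
    _ = (∑ j, |A⁻¹ i j|) * ‖latPt A k‖ := (Finset.sum_mul _ _ _).symm
    _ ≤ ((∑ i, ∑ j, |A⁻¹ i j|) + 1) * ‖latPt A k‖ := by
        apply mul_le_mul_of_nonneg_right _ (norm_nonneg _)
        refine le_add_of_le_of_nonneg ?_ zero_le_one
        exact Finset.single_le_sum (f := fun i => ∑ j, |A⁻¹ i j|)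
          (fun i _ => Finset.sum_nonneg fun j _ => abs_nonneg _) (Finset.mem_univ i)

lemma summable_onedim {r : ℝ} (hr : 1 < r) :
    Summable (fun n : ℤ => (1 + |(n : ℝ)|) ^ (-r)) := by
  have h0 : Summable (fun n : ℤ => |(n : ℝ)| ^ (-r)) := Real.summable_abs_int_rpow hr
  have h1 : Summable (fun n : ℤ => if n = 0 then (1 : ℝ) else 0) :=
    summable_of_ne_finset_zero (s := {0}) (fun b hb => if_neg (by simpa using hb))
  refine Summable.of_nonneg_of_le (fun n => by positivity) (fun n => ?_) (h0.add h1)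
  by_cases hn : n = 0
  · subst hn
    simp [Real.zero_rpow (by linarith : -r ≠ 0), Real.one_rpow]
  · have habs : 0 < |(n : ℝ)| := abs_pos.mpr (Int.cast_ne_zero.mpr hn)
    have hle : |(n : ℝ)| ≤ 1 + |(n : ℝ)| := by linarith
    have := Real.rpow_le_rpow_of_nonpos habs hle (by linarith : -r ≤ 0)
    simpa [hn] using this

lemma summable_pi {r : ℝ} (hr : 1 < r) (d : ℕ) :
    Summable (fun k : Fin d → ℤ => ∏ i, (1 + |(k i : ℝ)|) ^ (-r)) := by
  induction d with
  | zero => exact Summable.of_finite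
  | succ n ih =>
    have hmul := (summable_onedim hr).mul_of_nonneg ih
      (fun _ => by positivity) (fun k => Finset.prod_nonneg fun i _ => by positivity)
    apply (Fin.consEquiv (fun _ : Fin (n + 1) => ℤ)).summable_iff.mp
    apply hmul.congr
    rintro ⟨a, k⟩
    simp [Function.comp, Fin.consEquiv, Fin.prod_univ_succ]

lemma summable_h {A : Matrix (Fin d) (Fin d) ℝ} (hd : 1 ≤ d) (hA : A.det ≠ 0)
    {s : ℝ} (hs : (d : ℝ) < s) :
    Summable (fun k : Fin d → ℤ => ‖latPt A k‖ ^ (-s)) := by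
  obtain ⟨C, hC1, hC⟩ := coord_bound hA
  have hd0 : (0 : ℝ) < d := by exact_mod_cast hd
  have hs0 : 0 < s := lt_trans hd0 hs
  have hr : 1 < s / d := (one_lt_div hd0).mpr hs
  refine Summable.of_nonneg_of_le (fun k => Real.rpow_nonneg (norm_nonneg _) _)
    (fun k => ?_) ((summable_pi hr d).mul_left ((2 * C) ^ s))
  by_cases hk : k = 0
  · subst hk
    rw [latPt_zero, norm_zero, Real.zero_rpow (by linarith : -s ≠ 0)]
    have h00 : (0:ℝ) ≤ ∏ i : Fin d, (1 + |((0 : Fin d → ℤ) i : ℝ)|) ^ (-(s/d)) :=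
      Finset.prod_nonneg fun i _ => Real.rpow_nonneg (by positivity) _
    exact mul_nonneg (Real.rpow_nonneg (by positivity) _) h00
  · have hnz : latPt A k ≠ 0 := fun h => hk ((latPt_eq_zero_iff hA k).mp h)
    have hpos : 0 < ‖latPt A k‖ := norm_pos_iff.mpr hnz
    obtain ⟨i0, hi0⟩ : ∃ i, k i ≠ 0 := by
      by_contra hcon; push_neg at hcon; exact hk (funext hcon)
    have h1le : 1 ≤ C * ‖latPt A k‖ := by
      have hc := hC k i0
      have habs1 : (1 : ℝ) ≤ |(k i0 : ℝ)| := by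
        have := Int.one_le_abs hi0
        calc (1:ℝ) ≤ (|k i0| : ℤ) := by exact_mod_cast this
          _ = |(k i0 : ℝ)| := by push_cast; ring
      linarith
    have hco : ∀ i, 1 + |(k i : ℝ)| ≤ 2 * C * ‖latPt A k‖ := by
      intro i
      have := hC k i
      nlinarith
    have hfac : ∀ i : Fin d, ((2 * C * ‖latPt A k‖) ^ (-(s/d))) ≤ (1 + |(k i : ℝ)|) ^ (-(s/d)) :=
      fun i => Real.rpow_le_rpow_of_nonpos (by positivity) (hco i)
        (by apply neg_nonpos_of_nonneg; positivity : -(s/d) ≤ 0)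
    have hprod : ((2 * C * ‖latPt A k‖) ^ (-(s/d))) ^ (d : ℕ) ≤
        ∏ i, (1 + |(k i : ℝ)|) ^ (-(s/d)) := by
      calc ((2 * C * ‖latPt A k‖) ^ (-(s/d))) ^ (d : ℕ)
          = ∏ _i : Fin d, ((2 * C * ‖latPt A k‖) ^ (-(s/d))) := by
            rw [Finset.prod_const, Finset.card_univ, Fintype.card_fin]
        _ ≤ ∏ i, (1 + |(k i : ℝ)|) ^ (-(s/d)) :=
            Finset.prod_le_prod (fun i _ => Real.rpow_nonneg (by positivity) _)
              (fun i _ => hfac i)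
    have hkey : ((2 * C * ‖latPt A k‖) ^ (-(s/d))) ^ (d : ℕ) =
        (2 * C * ‖latPt A k‖) ^ (-s) := by
      rw [← Real.rpow_natCast ((2 * C * ‖latPt A k‖) ^ (-(s/d))) d,
        ← Real.rpow_mul (by positivity)]
      congr 1
      field_simp
    have h2 : (2 * C * ‖latPt A k‖) ^ (-s) = (2 * C) ^ (-s) * ‖latPt A k‖ ^ (-s) :=
      Real.mul_rpow (by positivity) (norm_nonneg _)
    have h3 : ‖latPt A k‖ ^ (-s) = (2 * C) ^ s * ((2 * C * ‖latPt A k‖) ^ (-s)) := by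
      rw [h2, ← mul_assoc, ← Real.rpow_add (by positivity), add_neg_cancel,
        Real.rpow_zero, one_mul]
    rw [h3]
    exact mul_le_mul_of_nonneg_left (hkey ▸ hprod) (by positivity)

lemma mem_fund_iff {A : Matrix (Fin d) (Fin d) ℝ} (hA : A.det ≠ 0) {m : ℕ} (hm : 1 ≤ m)
    (k : Fin d → ℤ) :
    (m : ℝ)⁻¹ • latPt A k ∈ fundDomain A ↔ ∀ i, 0 ≤ k i ∧ k i < (m : ℤ) := by
  have hm0 : (0 : ℝ) < m := by exact_mod_cast hm
  have hrepr : (m : ℝ)⁻¹ • latPt A k =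
      (WithLp.equiv 2 (Fin d → ℝ)).symm (A.mulVec ((m : ℝ)⁻¹ • fun i => (k i : ℝ))) := by
    rw [Matrix.mulVec_smul, WithLp.equiv_symm_apply, WithLp.toLp_smul]
    rfl
  constructor
  · rintro ⟨t, ht, hx⟩
    rw [hrepr] at hx
    have heq : ((m : ℝ)⁻¹ • fun i => (k i : ℝ)) = t :=
      mulVec_inj hA ((WithLp.equiv 2 (Fin d → ℝ)).symm.injective hx)
    intro i
    have hti := ht i
    rw [← heq] at hti
    simp only [Pi.smul_apply, smul_eq_mul] at hti
    rw [inv_mul_eq_div] at hti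
    constructor
    · have := (div_nonneg_iff.mp hti.1)
      rcases this with ⟨h1, _⟩ | ⟨_, h2⟩
      · exact_mod_cast h1
      · exact ((not_le.mpr hm0) h2).elim
    · have := (div_lt_one hm0).mp hti.2
      exact_mod_cast this
  · intro hb
    refine ⟨(m : ℝ)⁻¹ • fun i => (k i : ℝ), fun i => ?_, hrepr⟩
    obtain ⟨h1, h2⟩ := hb i
    simp only [Pi.smul_apply, smul_eq_mul]
    rw [inv_mul_eq_div]
    constructor
    · apply div_nonneg _ hm0.le
      exact_mod_cast h1
    · rw [div_lt_one hm0]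
      exact_mod_cast h2

lemma smul_latPt_eq_zero_iff {A : Matrix (Fin d) (Fin d) ℝ} (hA : A.det ≠ 0) {m : ℕ}
    (hm : 1 ≤ m) (k : Fin d → ℤ) :
    (m : ℝ)⁻¹ • latPt A k = 0 ↔ k = 0 := by
  have hmne : ((m : ℝ))⁻¹ ≠ 0 := inv_ne_zero (by positivity)
  rw [smul_eq_zero]
  simp [hmne, latPt_eq_zero_iff hA]

lemma int_bounded_eq {M x y : ℤ} (hM : 0 < M) (hx1 : 0 ≤ x) (hx2 : x < M)
    (hy1 : 0 ≤ y) (hy2 : y < M) (h : (x - y) % M = 0) : x = y := by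
  obtain ⟨c, hc⟩ := Int.dvd_of_emod_eq_zero h
  have h1 : |x - y| < M := by rw [abs_sub_lt_iff]; omega
  have h2 : |M * c| = M * |c| := by rw [abs_mul, abs_of_pos hM]
  have h3 : M * |c| < M * 1 := by rw [← h2, ← hc, mul_one]; exact h1
  have hc1 : |c| < 1 := lt_of_mul_lt_mul_left h3 hM.le
  have hc0 : c = 0 := by rwa [Int.abs_lt_one_iff] at hc1
  rw [hc0, mul_zero] at hc
  omega

lemma emod_helper1 {M a b : ℤ} (hM : 0 < M) (ha : 0 ≤ a) (ha2 : a < M) :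
    ((a - b) % M + b) % M = a := by
  rw [Int.emod_add_emod, sub_add_cancel, Int.emod_eq_of_lt ha ha2]

lemma emod_helper2 {M r b : ℤ} (hM : 0 < M) (hr : 0 ≤ r) (hr2 : r < M) :
    ((r + b) % M - b) % M = r := by
  conv_lhs => rw [Int.sub_emod, Int.emod_emod_of_dvd _ dvd_rfl, ← Int.sub_emod]
  rw [add_sub_cancel_right, Int.emod_eq_of_lt hr hr2]

/-- Splitting `ℤ^d` as residues times `m ℤ^d`. -/
def splitEquiv (d m : ℕ) (hm : 1 ≤ m) (C : (Fin d → ℤ) → Prop)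
    (hC : ∀ k, C k ↔ ∀ i, 0 ≤ k i ∧ k i < (m : ℤ)) :
    {k : Fin d → ℤ // C k} × (Fin d → ℤ) ≃ (Fin d → ℤ) where
  toFun p := p.1.1 + m • p.2
  invFun n :=
    (⟨fun i => n i % (m : ℤ),
      (hC _).mpr fun i => ⟨Int.emod_nonneg _ (by exact_mod_cast Nat.one_le_iff_ne_zero.mp hm),
        Int.emod_lt_of_pos _ (by exact_mod_cast hm)⟩⟩,
      fun i => n i / (m : ℤ))
  left_inv := by
    rintro ⟨⟨j, hj⟩, c⟩
    have hM : (0 : ℤ) < (m : ℤ) := by exact_mod_cast hm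
    have hjb := (hC j).mp hj
    refine Prod.ext (Subtype.ext (funext fun i => ?_)) (funext fun i => ?_)
    · show (j + m • c) i % (m : ℤ) = j i
      have : (j + m • c) i = j i + (m : ℤ) * c i := by
        simp [Pi.add_apply, Pi.smul_apply, nsmul_eq_mul]
      rw [this, Int.add_mul_emod_self_left, Int.emod_eq_of_lt (hjb i).1 (hjb i).2]
    · show (j + m • c) i / (m : ℤ) = c i
      have : (j + m • c) i = j i + (m : ℤ) * c i := by
        simp [Pi.add_apply, Pi.smul_apply, nsmul_eq_mul]
      rw [this, Int.add_mul_ediv_left _ _ hM.ne',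
        Int.ediv_eq_zero_of_lt (hjb i).1 (hjb i).2, zero_add]
  right_inv := by
    intro n
    have hM : (0 : ℤ) < (m : ℤ) := by exact_mod_cast hm
    funext i
    show n i % (m : ℤ) + (m • fun i => n i / (m : ℤ)) i = n i
    have : (m • fun i => n i / (m : ℤ)) i = (m : ℤ) * (n i / (m : ℤ)) := by
      simp [Pi.smul_apply, nsmul_eq_mul]
    rw [this, Int.emod_add_mul_ediv]

/-- The pairs-to-(point, residue) equivalence. -/
def pairEquiv (d m : ℕ) (hm : 1 ≤ m) (C N : (Fin d → ℤ) → Prop)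
    (hC : ∀ k, C k ↔ ∀ i, 0 ≤ k i ∧ k i < (m : ℤ)) (hN : ∀ k, N k ↔ k ≠ 0) :
    {p : {k : Fin d → ℤ // C k} × {k : Fin d → ℤ // C k} // p.1 ≠ p.2} ≃
      {k : Fin d → ℤ // C k} × {k : Fin d → ℤ // C k ∧ N k} where
  toFun p :=
    ⟨p.1.2, ⟨fun i => (p.1.1.1 i - p.1.2.1 i) % (m : ℤ),
      ⟨(hC _).mpr fun i => ⟨Int.emod_nonneg _ (by exact_mod_cast Nat.one_le_iff_ne_zero.mp hm),
          Int.emod_lt_of_pos _ (by exact_mod_cast hm)⟩,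
        (hN _).mpr (by
          intro h0
          apply p.2
          have hM : (0 : ℤ) < (m : ℤ) := by exact_mod_cast hm
          have hb1 := (hC p.1.1.1).mp p.1.1.2
          have hb2 := (hC p.1.2.1).mp p.1.2.2
          have : p.1.1.1 = p.1.2.1 := funext fun i =>
            int_bounded_eq hM (hb1 i).1 (hb1 i).2 (hb2 i).1 (hb2 i).2 (congrFun h0 i)
          exact Subtype.ext this)⟩⟩⟩
  invFun q :=
    ⟨(⟨fun i => (q.2.1 i + q.1.1 i) % (m : ℤ),
        (hC _).mpr fun i => ⟨Int.emod_nonneg _ (by exact_mod_cast Nat.one_le_iff_ne_zero.mp hm),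
          Int.emod_lt_of_pos _ (by exact_mod_cast hm)⟩⟩, q.1),
      by
        intro heq
        have hM : (0 : ℤ) < (m : ℤ) := by exact_mod_cast hm
        have hr := (hC q.2.1).mp q.2.2.1
        apply (hN q.2.1).mp q.2.2.2
        funext i
        have h1 : (q.2.1 i + q.1.1 i) % (m : ℤ) = q.1.1 i := by
          have := congrArg (fun x : {k : Fin d → ℤ // C k} => x.1 i) heq
          simpa using this
        have := emod_helper2 (b := q.1.1 i) hM (hr i).1 (hr i).2
        rw [h1] at this
        simpa using this.symm⟩
  left_inv := by
    rintro ⟨⟨⟨j1, hj1⟩, ⟨j2, hj2⟩⟩, hne⟩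
    have hM : (0 : ℤ) < (m : ℤ) := by exact_mod_cast hm
    have hb1 := (hC _).mp hj1
    apply Subtype.ext
    refine Prod.ext (Subtype.ext (funext fun i => ?_)) rfl
    show ((j1 i - j2 i) % (m : ℤ) + j2 i) % (m : ℤ) = j1 i
    exact emod_helper1 hM (hb1 i).1 (hb1 i).2
  right_inv := by
    rintro ⟨⟨b, hb⟩, ⟨r, hr⟩⟩
    have hM : (0 : ℤ) < (m : ℤ) := by exact_mod_cast hm
    have hrb := (hC _).mp hr.1
    refine Prod.ext rfl (Subtype.ext (funext fun i => ?_))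
    show ((r i + b i) % (m : ℤ) - b i) % (m : ℤ) = r i
    exact emod_helper2 hM (hrb i).1 (hrb i).2


end Stmt9

open Stmt9

theorem statement9 (d : ℕ) (hd : 1 ≤ d)
    (A : Matrix (Fin d) (Fin d) ℝ) (hA : A.det ≠ 0)
    (m : ℕ) (hm : 1 ≤ m) (s : ℝ) (hs : (d : ℝ) < s) :
    (∑' x : {k : Fin d → ℤ //
        (m : ℝ)⁻¹ • latPt A k ∈ fundDomain A ∧ (m : ℝ)⁻¹ • latPt A k ≠ 0},
      epHurwitzZeta A s ((m : ℝ)⁻¹ • latPt A x.1)) =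
      ((m : ℝ) ^ s - 1) * epsteinZeta A s ∧
    (∑' p : {p : {k : Fin d → ℤ // (m : ℝ)⁻¹ • latPt A k ∈ fundDomain A} ×
          {k : Fin d → ℤ // (m : ℝ)⁻¹ • latPt A k ∈ fundDomain A} // p.1 ≠ p.2},
      epHurwitzZeta A s ((m : ℝ)⁻¹ • latPt A p.1.1.1 - (m : ℝ)⁻¹ • latPt A p.1.2.1)) =
      (m : ℝ) ^ (d : ℕ) * ((m : ℝ) ^ s - 1) * epsteinZeta A s ∧
    Nat.card {k : Fin d → ℤ // (m : ℝ)⁻¹ • latPt A k ∈ fundDomain A} = m ^ d := by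
  classical
  have hm0 : (0 : ℝ) < m := by exact_mod_cast hm
  have hM : (0 : ℤ) < (m : ℤ) := by exact_mod_cast hm
  have hd0 : (0 : ℝ) < d := by exact_mod_cast hd
  have hs0 : (0 : ℝ) < s := lt_trans hd0 hs
  set C : (Fin d → ℤ) → Prop := fun k => (m : ℝ)⁻¹ • latPt A k ∈ fundDomain A with hCdef
  set N : (Fin d → ℤ) → Prop := fun k => (m : ℝ)⁻¹ • latPt A k ≠ 0 with hNdef
  have hCiff : ∀ k, C k ↔ ∀ i, 0 ≤ k i ∧ k i < (m : ℤ) := fun k => mem_fund_iff hA hm k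
  have hNiff : ∀ k, N k ↔ k ≠ 0 := fun k => not_congr (smul_latPt_eq_zero_iff hA hm k)
  set h : (Fin d → ℤ) → ℝ := fun n => ‖latPt A n‖ ^ (-s) with hhdef
  have hsum : Summable h := summable_h hd hA hs
  have hinj2 : ∀ j : Fin d → ℤ, Function.Injective (fun k : Fin d → ℤ => j + m • k) := by
    intro j a b hab
    have h2 := add_left_cancel hab
    funext i
    have h3 := congrFun h2 i
    simp only [Pi.smul_apply, nsmul_eq_mul] at h3
    exact mul_left_cancel₀ hM.ne' h3
  have hGs : ∀ j : Fin d → ℤ, Summable (fun k => h (j + m • k)) := fun j =>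
    hsum.comp_injective (hinj2 j)
  have hpow : ((m : ℝ)⁻¹) ^ (-s) = (m : ℝ) ^ s := by
    rw [Real.inv_rpow hm0.le, Real.rpow_neg hm0.le, inv_inv]
  have hterm : ∀ (j k : Fin d → ℤ),
      ‖(m : ℝ)⁻¹ • latPt A j + latPt A k‖ ^ (-s) = (m : ℝ) ^ s * h (j + m • k) := by
    intro j k
    have harg : (m : ℝ)⁻¹ • latPt A j + latPt A k = (m : ℝ)⁻¹ • latPt A (j + m • k) := by
      rw [latPt_add, latPt_nsmul, smul_add, smul_smul, inv_mul_cancel₀ hm0.ne', one_smul]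
    rw [harg, norm_smul, Real.norm_eq_abs, abs_of_pos (inv_pos.mpr hm0),
      Real.mul_rpow (by positivity) (norm_nonneg _), hpow]
  have hZ : ∀ j : Fin d → ℤ, epHurwitzZeta A s ((m : ℝ)⁻¹ • latPt A j)
      = (m : ℝ) ^ s * ∑' k, h (j + m • k) := by
    intro j
    unfold epHurwitzZeta
    rw [← tsum_mul_left]
    exact tsum_congr fun k => hterm j k
  have hper : ∀ (r c : Fin d → ℤ), epHurwitzZeta A s ((m : ℝ)⁻¹ • latPt A (r + m • c))
      = epHurwitzZeta A s ((m : ℝ)⁻¹ • latPt A r) := by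
    intro r c
    rw [hZ, hZ]
    congr 1
    calc ∑' k, h (r + m • c + m • k)
        = ∑' k, h (r + m • (c + k)) := tsum_congr fun k => by rw [smul_add, add_assoc]
      _ = ∑' k, h (r + m • k) := (Equiv.addLeft c).tsum_eq (fun k => h (r + m • k))
  set hE : {k : Fin d → ℤ // C k} × (Fin d → ℤ) ≃ (Fin d → ℤ) :=
    splitEquiv d m hm C hCiff with hEdef
  have hsumE : Summable (fun p : {k : Fin d → ℤ // C k} × (Fin d → ℤ) => h (hE p)) :=
    hsum.comp_injective hE.injective
  have key1 : ∑' (j : {k : Fin d → ℤ // C k}), ∑' k, h (j.1 + m • k) = ∑' n, h n := by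
    rw [← hE.tsum_eq h, Summable.tsum_prod' hsumE (fun b => hGs b.1)]
    exact tsum_congr fun b => tsum_congr fun c => rfl
  have hzeta : epsteinZeta A s = ∑' n, h n := by
    have hsupp : Function.support h ⊆ {k : Fin d → ℤ | k ≠ 0} := by
      intro k hk
      simp only [Function.mem_support] at hk
      intro hk0
      apply hk
      rw [hk0]
      show ‖latPt A (0 : Fin d → ℤ)‖ ^ (-s) = 0
      simp [latPt_zero, Real.zero_rpow (by linarith : -s ≠ 0)]
    unfold epsteinZeta
    exact tsum_subtype_eq_of_support_subset hsupp
  have hG0 : ∑' k : Fin d → ℤ, h ((0 : Fin d → ℤ) + m • k) = (m : ℝ) ^ (-s) * ∑' n, h n := by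
    rw [← tsum_mul_left]
    apply tsum_congr
    intro k
    show ‖latPt A ((0 : Fin d → ℤ) + m • k)‖ ^ (-s) = (m : ℝ) ^ (-s) * ‖latPt A k‖ ^ (-s)
    rw [zero_add, latPt_nsmul, norm_smul, Real.norm_natCast,
      Real.mul_rpow (by positivity) (norm_nonneg _)]
  set G : (Fin d → ℤ) → ℝ := fun j => epHurwitzZeta A s ((m : ℝ)⁻¹ • latPt A j) with hGdef
  set F0 : Finset (Fin d → ℤ) := Fintype.piFinset (fun _ : Fin d => Finset.Ico (0 : ℤ) (m : ℤ))
    with hF0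
  have hmemF0 : ∀ k, k ∈ F0 ↔ C k := by
    intro k
    rw [hF0, Fintype.mem_piFinset, hCiff]
    simp [Finset.mem_Ico]
  have hsumInd1 : Summable (({k | C k ∧ k ≠ 0} : Set (Fin d → ℤ)).indicator G) := by
    apply summable_of_ne_finset_zero (s := F0)
    intro b hb
    apply Set.indicator_of_notMem
    intro hbmem
    exact hb ((hmemF0 b).mpr hbmem.1)
  have hsumInd2 : Summable (({0} : Set (Fin d → ℤ)).indicator G) := by
    apply summable_of_ne_finset_zero (s := ({0} : Finset (Fin d → ℤ)))
    intro b hb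
    apply Set.indicator_of_notMem
    simpa using hb
  have hC0 : C (0 : Fin d → ℤ) := (hCiff 0).mpr fun i => ⟨le_refl _, by simpa using hM⟩
  have hkey4 : ∑' (j : {k : Fin d → ℤ // C k}), G j.1
      = (∑' (x : {k : Fin d → ℤ // C k ∧ k ≠ 0}), G x.1) + G 0 := by
    have hptw : ∀ n, ({k | C k} : Set (Fin d → ℤ)).indicator G n
        = ({k | C k ∧ k ≠ 0} : Set (Fin d → ℤ)).indicator G n
          + ({0} : Set (Fin d → ℤ)).indicator G n := by
      intro n
      by_cases hn : n = 0
      · subst hn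
        rw [Set.indicator_of_mem (by exact hC0), Set.indicator_of_notMem (by simp),
          Set.indicator_of_mem (by exact rfl), zero_add]
      · by_cases hCn : C n
        · rw [Set.indicator_of_mem (by exact hCn), Set.indicator_of_mem (by exact ⟨hCn, hn⟩),
            Set.indicator_of_notMem (by simpa using hn), add_zero]
        · rw [Set.indicator_of_notMem (by exact hCn),
            Set.indicator_of_notMem (by intro hmem; exact hCn hmem.1),
            Set.indicator_of_notMem (by simpa using hn), add_zero]
    calc ∑' (j : {k : Fin d → ℤ // C k}), G j.1
        = ∑' n, ({k | C k} : Set (Fin d → ℤ)).indicator G n := tsum_subtype _ G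
      _ = ∑' n, (({k | C k ∧ k ≠ 0} : Set (Fin d → ℤ)).indicator G n
          + ({0} : Set (Fin d → ℤ)).indicator G n) := tsum_congr hptw
      _ = (∑' n, ({k | C k ∧ k ≠ 0} : Set (Fin d → ℤ)).indicator G n)
          + ∑' n, ({0} : Set (Fin d → ℤ)).indicator G n := Summable.tsum_add hsumInd1 hsumInd2
      _ = (∑' (x : {k : Fin d → ℤ // C k ∧ k ≠ 0}), G x.1) + G 0 := by
          rw [← tsum_subtype]
          congr 1
          rw [tsum_eq_single (0 : Fin d → ℤ)
            (fun b hb => Set.indicator_of_notMem (by simpa using hb) G)]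
          exact Set.indicator_of_mem rfl G
  have htot : ∑' (j : {k : Fin d → ℤ // C k}), G j.1 = (m : ℝ) ^ s * ∑' n, h n := by
    calc ∑' (j : {k : Fin d → ℤ // C k}), G j.1
        = ∑' (j : {k : Fin d → ℤ // C k}), (m : ℝ) ^ s * ∑' k, h (j.1 + m • k) :=
          tsum_congr fun j => hZ j.1
      _ = (m : ℝ) ^ s * ∑' (j : {k : Fin d → ℤ // C k}), ∑' k, h (j.1 + m • k) :=
          tsum_mul_left
      _ = (m : ℝ) ^ s * ∑' n, h n := by rw [key1]
  have hms : (m : ℝ) ^ s * (m : ℝ) ^ (-s) = 1 := by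
    rw [← Real.rpow_add hm0, add_neg_cancel, Real.rpow_zero]
  have hG0' : G 0 = ∑' n, h n := by
    show epHurwitzZeta A s ((m : ℝ)⁻¹ • latPt A (0 : Fin d → ℤ)) = ∑' n, h n
    rw [hZ 0, hG0, ← mul_assoc, hms, one_mul]
  have part1' : ∑' (x : {k : Fin d → ℤ // C k ∧ k ≠ 0}), G x.1
      = ((m : ℝ) ^ s - 1) * epsteinZeta A s := by
    have hk4 := hkey4
    rw [htot, hG0'] at hk4
    rw [hzeta]
    linarith [hk4]
  have part1 : ∑' (x : {k : Fin d → ℤ // C k ∧ N k}), G x.1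
      = ((m : ℝ) ^ s - 1) * epsteinZeta A s := by
    rw [← part1']
    exact Equiv.tsum_eq
      (Equiv.subtypeEquivRight (fun k => and_congr_right fun _ => hNiff k))
      (fun x : {k : Fin d → ℤ // C k ∧ k ≠ 0} => G x.1)
  have e3 : {k : Fin d → ℤ // C k} ≃ {x : Fin d → ℤ // x ∈ F0} :=
    Equiv.subtypeEquivRight (fun k => (hmemF0 k).symm)
  have part3 : Nat.card {k : Fin d → ℤ // C k} = m ^ d := by
    rw [Nat.card_congr e3, Nat.card_eq_finsetCard, hF0, Fintype.card_piFinset]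
    simp [Int.card_Ico]
  haveI instF : Finite {k : Fin d → ℤ // C k} := Finite.of_equiv _ e3.symm
  haveI : Finite {k : Fin d → ℤ // C k ∧ N k} := by
    apply Finite.of_injective
      (fun x : {k : Fin d → ℤ // C k ∧ N k} => (⟨x.1, x.2.1⟩ : {k : Fin d → ℤ // C k}))
    intro a b hab
    have hval := congrArg Subtype.val hab
    simp only [] at hval
    exact Subtype.ext hval
  set epair := pairEquiv d m hm C N hCiff hNiff with hepair
  have hsummand : ∀ p : {p : {k : Fin d → ℤ // C k} × {k : Fin d → ℤ // C k} // p.1 ≠ p.2},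
      epHurwitzZeta A s ((m : ℝ)⁻¹ • latPt A p.1.1.1 - (m : ℝ)⁻¹ • latPt A p.1.2.1)
      = (fun q : {k : Fin d → ℤ // C k} × {k : Fin d → ℤ // C k ∧ N k} => G q.2.1)
          (epair p) := by
    intro p
    have hdiffarg : (m : ℝ)⁻¹ • latPt A p.1.1.1 - (m : ℝ)⁻¹ • latPt A p.1.2.1
        = (m : ℝ)⁻¹ • latPt A (p.1.1.1 - p.1.2.1) := by rw [latPt_sub, smul_sub]
    have hdecomp : p.1.1.1 - p.1.2.1
        = (fun i => (p.1.1.1 i - p.1.2.1 i) % (m : ℤ))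
          + m • (fun i => (p.1.1.1 i - p.1.2.1 i) / (m : ℤ)) := by
      funext i
      simp only [Pi.add_apply, Pi.smul_apply, nsmul_eq_mul, Pi.sub_apply]
      exact (Int.emod_add_mul_ediv _ _).symm
    rw [hdiffarg, hdecomp, hper]
    rfl
  have part2 : (∑' p : {p : {k : Fin d → ℤ // C k} × {k : Fin d → ℤ // C k} // p.1 ≠ p.2},
      epHurwitzZeta A s ((m : ℝ)⁻¹ • latPt A p.1.1.1 - (m : ℝ)⁻¹ • latPt A p.1.2.1))
      = (m : ℝ) ^ (d : ℕ) * ((m : ℝ) ^ s - 1) * epsteinZeta A s := by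
    calc (∑' p : {p : {k : Fin d → ℤ // C k} × {k : Fin d → ℤ // C k} // p.1 ≠ p.2},
        epHurwitzZeta A s ((m : ℝ)⁻¹ • latPt A p.1.1.1 - (m : ℝ)⁻¹ • latPt A p.1.2.1))
        = ∑' p, (fun q : {k : Fin d → ℤ // C k} × {k : Fin d → ℤ // C k ∧ N k} => G q.2.1)
            (epair p) := tsum_congr hsummand
      _ = ∑' q : {k : Fin d → ℤ // C k} × {k : Fin d → ℤ // C k ∧ N k}, G q.2.1 :=
          Equiv.tsum_eq epair (fun q : {k : Fin d → ℤ // C k} × {k : Fin d → ℤ // C k ∧ N k} => G q.2.1)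
      _ = ∑' (_b : {k : Fin d → ℤ // C k}), ∑' (x : {k : Fin d → ℤ // C k ∧ N k}), G x.1 :=
          Summable.tsum_prod' Summable.of_finite (fun _b => Summable.of_finite)
      _ = ∑' (_b : {k : Fin d → ℤ // C k}), ((m : ℝ) ^ s - 1) * epsteinZeta A s :=
          tsum_congr fun _b => part1
      _ = (Nat.card {k : Fin d → ℤ // C k}) • (((m : ℝ) ^ s - 1) * epsteinZeta A s) :=
          tsum_const _
      _ = (m : ℝ) ^ (d : ℕ) * ((m : ℝ) ^ s - 1) * epsteinZeta A s := by
          rw [part3, nsmul_eq_mul]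
          push_cast
          ring
  exact ⟨part1, part2, part3⟩


end
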